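/- arXiv:1506.03473 — 7 statements merged into one kernel-verified Lean document; each statement's English description precedes it below -/
import Mathlib

section
/- Let ℓ ≥ 1 and let x₁, x₂, …, x_m be natural numbers each at most 2^(ℓ-1) (block values bounded by half the block capacity). If the total sum ∑_{i=1}^m x_i is at least 2^ℓ, then there exists j ≤ m such that 2^(ℓ-1) ≤ ∑_{i=1}^j x_i ≤ 2^ℓ - 1. -/
/-- Overflow-detection lemma: if each block value `x i ≤ 2^(ℓ-1)` and the total
sum is at least `2^ℓ`, then some prefix sum lies in `[2^(ℓ-1), 2^ℓ - 1]`. -/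
theorem exists_prefix_sum_in_interval (ℓ m : ℕ) (hℓ : 1 ≤ ℓ) (x : ℕ → ℕ)
    (hx : ∀ i < m, x i ≤ 2 ^ (ℓ - 1))
    (htot : 2 ^ ℓ ≤ ∑ i ∈ Finset.range m, x i) :
    ∃ j ≤ m, 2 ^ (ℓ - 1) ≤ ∑ i ∈ Finset.range j, x i ∧
      ∑ i ∈ Finset.range j, x i ≤ 2 ^ ℓ - 1 := by
  classical
  set S : ℕ → ℕ := fun j => ∑ i ∈ Finset.range j, x i with hS
  have hm : 2 ^ (ℓ - 1) ≤ S m :=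
    le_trans (Nat.pow_le_pow_right (by norm_num) (Nat.sub_le ℓ 1)) htot
  have hexists : ∃ j, 2 ^ (ℓ - 1) ≤ S j := ⟨m, hm⟩
  set j := Nat.find hexists with hjdef
  have hj : 2 ^ (ℓ - 1) ≤ S j := Nat.find_spec hexists
  have hjm : j ≤ m := Nat.find_min' hexists hm
  have hjpos : 1 ≤ j := by
    rcases Nat.eq_zero_or_pos j with h0 | h
    · exfalso
      have : 2 ^ (ℓ - 1) ≤ S 0 := h0 ▸ hj
      simp [hS] at this
    · exact h
  have hprev : S (j - 1) < 2 ^ (ℓ - 1) := by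
    by_contra h
    exact absurd (Nat.find_min' hexists (not_lt.mp h)) (by omega)
  have hstep : S j = S (j - 1) + x (j - 1) := by
    have : j = (j - 1) + 1 := by omega
    rw [this]
    simp [hS, Finset.sum_range_succ]
  have hxb : x (j - 1) ≤ 2 ^ (ℓ - 1) := hx _ (by omega)
  have hpow : 2 ^ (ℓ - 1) + 2 ^ (ℓ - 1) = 2 ^ ℓ := by
    conv_rhs => rw [← Nat.sub_add_cancel hℓ]
    rw [pow_succ]; ring
  refine ⟨j, hjm, hj, ?_⟩
  show S j ≤ 2 ^ ℓ - 1
  omega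
end

section
/- Let x be a natural number whose binary representation, when split into consecutive blocks of length 2^(k+1), has blocks viewed as values x_i < 2^(2^(k+1)). Then the operation (x AND m) + ((x / 2^(2^k)) AND m), where m is the mask with the low 2^k bits of every 2^(k+1)-bit block set, produces a number whose i-th block of length 2^(k+1) equals (low half of x_i) + (high half of x_i), provided these sums fit in 2^(k+1) bits. -/
/-!
Read `x` as a number in base `B = 2 ^ 2 ^ (k + 1)` with digits `c i`. Bitwise AND acts digitwise
on such expansions, and the mask has digit `2 ^ 2 ^ k - 1`, so `x &&& m` and
`(x / 2 ^ 2 ^ k) &&& m` are again base-`B` expansions, with digits the low and the high halves of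
the `c i`. Their sum has digits `c i % 2 ^ 2 ^ k + c i / 2 ^ 2 ^ k`; since these are below `B`,
no carries occur and the `i`-th digit is read off.
-/

open Finset

section Digits

variable {B M : ℕ} {a : ℕ → ℕ}

theorem sum_range_mul_pow_lt (ha : ∀ i < M, a i < B) :
    ∑ i ∈ range M, a i * B ^ i < B ^ M := by
  induction M with
  | zero => simp
  | succ M ih =>
    have hlow := ih fun i hi => ha i (by omega)
    have htop : a M + 1 ≤ B := ha M (by omega)
    calc ∑ i ∈ range (M + 1), a i * B ^ i
        < (a M + 1) * B ^ M := by rw [sum_range_succ]; linarith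
      _ ≤ B ^ (M + 1) := by rw [pow_succ']; gcongr

theorem sum_range_mul_pow_div_pow_mod (ha : ∀ i < M, a i < B) {i : ℕ} (hi : i < M) :
    (∑ j ∈ range M, a j * B ^ j) / B ^ i % B = a i := by
  induction M with
  | zero => omega
  | succ M ih =>
    have hlow := sum_range_mul_pow_lt fun j (hj : j < M) => ha j (by omega)
    have hB : 0 < B := by have := ha i hi; omega
    rw [sum_range_succ]
    rcases Nat.lt_succ_iff_lt_or_eq.mp hi with hiM | rfl
    · -- the top digit sits in a multiple of `B ^ (i + 1)`, so it is invisible in digit `i`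
      obtain ⟨d, rfl⟩ := Nat.exists_eq_add_of_lt hiM
      rw [show a (i + d + 1) * B ^ (i + d + 1) = B ^ i * (B * (a (i + d + 1) * B ^ d)) by ring,
        Nat.add_mul_div_left _ _ (by positivity), Nat.add_mul_mod_self_left]
      exact ih (fun j hj => ha j (by omega)) hiM
    · rw [Nat.add_mul_div_right _ _ (by positivity), Nat.div_eq_of_lt hlow, zero_add,
        Nat.mod_eq_of_lt (ha i hi)]

theorem sum_range_div_pow_mod_mul_pow {y : ℕ} (hy : y < B ^ M) :
    ∑ i ∈ range M, y / B ^ i % B * B ^ i = y := by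
  induction M generalizing y with
  | zero => simp_all
  | succ M ih =>
    have hy' : y / B < B ^ M := Nat.div_lt_of_lt_mul (by rwa [← pow_succ'])
    have hshift (i : ℕ) :
        y / B ^ (i + 1) % B * B ^ (i + 1) = B * (y / B / B ^ i % B * B ^ i) := by
      rw [pow_succ', ← Nat.div_div_eq_div_mul]; ring
    rw [sum_range_succ', sum_congr rfl fun i _ => hshift i, ← mul_sum, ih hy']
    simp [Nat.div_add_mod]

end Digits

section Bits

variable {n M : ℕ}

theorem testBit_sum_range_succ_mul_two_pow_pow {a : ℕ → ℕ} (ha : ∀ i < M, a i < 2 ^ n)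
    (j : ℕ) :
    (∑ i ∈ range (M + 1), a i * (2 ^ n) ^ i).testBit j =
      if j < n * M then (∑ i ∈ range M, a i * (2 ^ n) ^ i).testBit j
      else (a M).testBit (j - n * M) := by
  have hlow := sum_range_mul_pow_lt ha
  rw [← pow_mul] at hlow
  rw [sum_range_succ, ← pow_mul, add_comm, mul_comm, Nat.testBit_two_pow_mul_add _ hlow]

theorem sum_range_mul_two_pow_pow_and {a b : ℕ → ℕ} (ha : ∀ i < M, a i < 2 ^ n)
    (hb : ∀ i < M, b i < 2 ^ n) :
    (∑ i ∈ range M, a i * (2 ^ n) ^ i) &&& (∑ i ∈ range M, b i * (2 ^ n) ^ i) =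
      ∑ i ∈ range M, (a i &&& b i) * (2 ^ n) ^ i := by
  induction M with
  | zero => simp
  | succ M ih =>
    have hab : ∀ i < M, (a i &&& b i) < 2 ^ n := fun i hi =>
      Nat.and_le_left.trans_lt (ha i (by omega))
    apply Nat.eq_of_testBit_eq
    intro j
    rw [Nat.testBit_and, testBit_sum_range_succ_mul_two_pow_pow (fun i hi => ha i (by omega)),
      testBit_sum_range_succ_mul_two_pow_pow (fun i hi => hb i (by omega)),
      testBit_sum_range_succ_mul_two_pow_pow hab,
      ← ih (fun i hi => ha i (by omega)) (fun i hi => hb i (by omega))]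
    split_ifs <;> simp only [Nat.testBit_and]

theorem and_sum_range_two_pow_sub_one_mul_pow {h y : ℕ} (hh : h ≤ n) (hy : y < (2 ^ n) ^ M) :
    y &&& ∑ i ∈ range M, (2 ^ h - 1) * (2 ^ n) ^ i =
      ∑ i ∈ range M, y / (2 ^ n) ^ i % 2 ^ h * (2 ^ n) ^ i := by
  have hmask : 2 ^ h - 1 < 2 ^ n :=
    (Nat.sub_lt (by positivity) one_pos).trans_le (Nat.pow_le_pow_right two_pos hh)
  conv_lhs => rw [← sum_range_div_pow_mod_mul_pow hy]
  rw [sum_range_mul_two_pow_pow_and (fun i _ => Nat.mod_lt _ (by positivity)) fun i _ => hmask]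
  refine sum_congr rfl fun i _ => ?_
  rw [Nat.and_two_pow_sub_one_eq_mod, Nat.mod_mod_of_dvd _ (pow_dvd_pow 2 hh)]

end Bits

/-- Block-doubling step: with `x` decomposed into `M` blocks `c i` of length
`2^(k+1)` and `m` the mask with the low `2^k` bits of every block set, the
value `(x AND m) + ((x / 2^(2^k)) AND m)` has `i`-th block
`(c i mod 2^(2^k)) + (c i / 2^(2^k))`, provided these sums fit in `2^(k+1)` bits. -/
theorem block_doubling_step (k M : ℕ) (c : ℕ → ℕ)
    (hc : ∀ i < M, c i < 2 ^ (2 ^ (k + 1)))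
    (hfit : ∀ i < M, c i % 2 ^ (2 ^ k) + c i / 2 ^ (2 ^ k) < 2 ^ (2 ^ (k + 1)))
    (x m : ℕ)
    (hx : x = ∑ i ∈ Finset.range M, c i * 2 ^ (i * 2 ^ (k + 1)))
    (hm : m = ∑ j ∈ Finset.range M, (2 ^ (2 ^ k) - 1) * 2 ^ (j * 2 ^ (k + 1))) :
    ∀ i < M,
      (((x &&& m) + ((x / 2 ^ (2 ^ k)) &&& m)) / 2 ^ (i * 2 ^ (k + 1)))
          % 2 ^ (2 ^ (k + 1))
        = c i % 2 ^ (2 ^ k) + c i / 2 ^ (2 ^ k) := by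
  set n := 2 ^ (k + 1)
  set h := 2 ^ k
  have hn : n = 2 * h := pow_succ' 2 k
  have hh : h ≤ n := by omega
  simp only [pow_mul'] at hx hm ⊢
  have hxlt : x < (2 ^ n) ^ M := hx ▸ sum_range_mul_pow_lt hc
  have hdigit : ∀ i < M, x / (2 ^ n) ^ i % 2 ^ n = c i := fun i hi =>
    hx ▸ sum_range_mul_pow_div_pow_mod hc hi
  have hlow : x &&& m = ∑ i ∈ range M, c i % 2 ^ h * (2 ^ n) ^ i := by
    rw [hm, and_sum_range_two_pow_sub_one_mul_pow hh hxlt]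
    refine sum_congr rfl fun i hi => ?_
    rw [← hdigit i (mem_range.mp hi), Nat.mod_mod_of_dvd _ (pow_dvd_pow 2 hh)]
  have hhigh : x / 2 ^ h &&& m = ∑ i ∈ range M, c i / 2 ^ h * (2 ^ n) ^ i := by
    rw [hm, and_sum_range_two_pow_sub_one_mul_pow hh ((Nat.div_le_self _ _).trans_lt hxlt)]
    refine sum_congr rfl fun i hi => congrArg (· * _) ?_
    rw [← hdigit i (mem_range.mp hi), Nat.div_div_eq_div_mul, mul_comm,
      ← Nat.div_div_eq_div_mul, hn, two_mul, pow_add, Nat.mod_mul_right_div_self]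
  intro i hi
  rw [hlow, hhigh, ← sum_add_distrib]
  simp only [← add_mul]
  exact sum_range_mul_pow_div_pow_mod hfit hi
end

section
/- The block-doubling step preserves the total population count: if x is a sum ∑_{i=0}^{m-1} c_i · 2^(i·2^(k+1)) with each c_i < 2^(2^(k+1)), and y = (x AND m) + ((x / 2^(2^k)) AND m) with m the mask selecting the low 2^k bits of each 2^(k+1)-bit block, then the sum of the 2^(k+1)-bit blocks of y equals ∑ c_i-low-halves + ∑ c_i-high-halves, i.e., the sum of all 2^k-bit sub-blocks of x. -/
/-!
Read `x` in base `b = 2 ^ 2 ^ (k + 1)`: its digits are the `c i`. Masking keeps the low `2 ^ k`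
bits of every digit, so `x &&& m` has digits `c i % 2 ^ 2 ^ k`, while shifting by `2 ^ k` first
brings each high half into the low half of its own block, so `(x / 2 ^ 2 ^ k) &&& m` has digits
`c i / 2 ^ 2 ^ k`. Each digitwise sum `c i % 2 ^ 2 ^ k + c i / 2 ^ 2 ^ k` is at most `c i < b`,
so adding the two numbers produces no carry and the digits of `y` are exactly these sums.
-/

open Finset

namespace Nat

theorem mod_add_div_le_self (c q : ℕ) : c % q + c / q ≤ c := by
  rcases q.eq_zero_or_pos with rfl | hq
  · simp
  · calc c % q + c / q ≤ c % q + q * (c / q) := by gcongr; exact Nat.le_mul_of_pos_left _ hq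
      _ = c := Nat.mod_add_div c q

theorem two_pow_mul_add_and_two_pow_mul_add {B a b x y : ℕ} (ha : a < 2 ^ B) (hb : b < 2 ^ B) :
    (a + 2 ^ B * x) &&& (b + 2 ^ B * y) = (a &&& b) + 2 ^ B * (x &&& y) := by
  have hpos : 0 < 2 ^ B := Nat.two_pow_pos B
  rw [← Nat.mod_add_div ((a + 2 ^ B * x) &&& (b + 2 ^ B * y)) (2 ^ B), Nat.and_mod_two_pow,
    Nat.and_div_two_pow]
  simp [Nat.add_mul_mod_self_left, Nat.mod_eq_of_lt, Nat.add_mul_div_left _ _ hpos,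
    Nat.div_eq_of_lt, ha, hb]

theorem sum_range_succ_mul_pow (d : ℕ → ℕ) (b M : ℕ) :
    ∑ i ∈ range (M + 1), d i * b ^ i = d 0 + b * ∑ i ∈ range M, d (i + 1) * b ^ i := by
  rw [sum_range_succ', mul_sum, add_comm, pow_zero, mul_one]
  congr 1
  exact sum_congr rfl fun i _ => by ring

theorem sum_range_mul_pow_div_pow_mod {b M j : ℕ} {d : ℕ → ℕ} (hd : ∀ i < M, d i < b)
    (hj : j < M) : (∑ i ∈ range M, d i * b ^ i) / b ^ j % b = d j := by
  induction M generalizing d j with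
  | zero => omega
  | succ M ih =>
    have hd0 : d 0 < b := hd 0 M.succ_pos
    rw [sum_range_succ_mul_pow]
    cases j with
    | zero => simpa [Nat.add_mul_mod_self_left] using Nat.mod_eq_of_lt hd0
    | succ j =>
      rw [pow_succ', ← Nat.div_div_eq_div_mul, Nat.add_mul_div_left _ _ (by omega),
        Nat.div_eq_of_lt hd0, zero_add]
      exact ih (fun i hi => hd (i + 1) (by omega)) (by omega)

theorem and_sum_range_mask {s W : ℕ} (hsW : s ≤ W) (n M : ℕ) :
    n &&& ∑ i ∈ range M, (2 ^ s - 1) * (2 ^ W) ^ i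
      = ∑ i ∈ range M, n / (2 ^ W) ^ i % 2 ^ s * (2 ^ W) ^ i := by
  induction M generalizing n with
  | zero => simp
  | succ M ih =>
    have hmask : 2 ^ s - 1 < 2 ^ W :=
      lt_of_lt_of_le (Nat.sub_lt (Nat.two_pow_pos s) one_pos) (Nat.pow_le_pow_right two_pos hsW)
    conv_lhs => rw [← Nat.mod_add_div n (2 ^ W)]
    rw [sum_range_succ_mul_pow, sum_range_succ_mul_pow,
      two_pow_mul_add_and_two_pow_mul_add (Nat.mod_lt _ (Nat.two_pow_pos W)) hmask, ih,
      Nat.and_two_pow_sub_one_eq_mod, Nat.mod_mod_of_dvd _ (Nat.pow_dvd_pow 2 hsW)]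
    simp only [pow_zero, Nat.div_one, pow_succ', Nat.div_div_eq_div_mul]

end Nat

/-- The block-doubling step preserves the total count: the sum of the
`2^(k+1)`-bit blocks of `y = (x AND m) + ((x / 2^(2^k)) AND m)` equals the sum
of the low halves plus the sum of the high halves of the blocks of `x`. -/
theorem block_doubling_preserves_sum (k M : ℕ) (c : ℕ → ℕ)
    (hc : ∀ i < M, c i < 2 ^ (2 ^ (k + 1)))
    (x m y : ℕ)
    (hx : x = ∑ i ∈ Finset.range M, c i * 2 ^ (i * 2 ^ (k + 1)))
    (hm : m = ∑ j ∈ Finset.range M, (2 ^ (2 ^ k) - 1) * 2 ^ (j * 2 ^ (k + 1)))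
    (hy : y = (x &&& m) + ((x / 2 ^ (2 ^ k)) &&& m)) :
    (∑ i ∈ Finset.range M, (y / 2 ^ (i * 2 ^ (k + 1))) % 2 ^ (2 ^ (k + 1)))
      = (∑ i ∈ Finset.range M, c i % 2 ^ (2 ^ k))
        + ∑ i ∈ Finset.range M, c i / 2 ^ (2 ^ k) := by
  set s := 2 ^ k
  have hW : 2 ^ (k + 1) = s + s := by rw [pow_succ]; ring
  simp only [pow_mul'] at hx hm ⊢
  have hsW : s ≤ 2 ^ (k + 1) := hW ▸ Nat.le_add_right s s
  set b := 2 ^ 2 ^ (k + 1)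
  have hb : b = 2 ^ s * 2 ^ s := by rw [← pow_add, ← hW]
  have hcx : ∀ i < M, x / b ^ i % b = c i := fun i hi => by
    rw [hx]; exact Nat.sum_range_mul_pow_div_pow_mod hc hi
  have hlow : ∀ i < M, x / b ^ i % 2 ^ s = c i % 2 ^ s := fun i hi => by
    rw [← hcx i hi, hb, Nat.mod_mul_right_mod]
  have hhigh : ∀ i < M, x / 2 ^ s / b ^ i % 2 ^ s = c i / 2 ^ s := fun i hi => by
    rw [← hcx i hi, hb, Nat.mod_mul_right_div_self, Nat.div_right_comm]
  have hy' : y = ∑ i ∈ range M, (c i % 2 ^ s + c i / 2 ^ s) * b ^ i := by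
    rw [hy, hm, Nat.and_sum_range_mask hsW, Nat.and_sum_range_mask hsW,
      ← sum_add_distrib]
    refine sum_congr rfl fun i hi => ?_
    rw [hlow i (mem_range.mp hi), hhigh i (mem_range.mp hi), add_mul]
  have hdigit : ∀ i < M, c i % 2 ^ s + c i / 2 ^ s < b := fun i hi =>
    (Nat.mod_add_div_le_self _ _).trans_lt (hc i hi)
  rw [← sum_add_distrib, hy']
  exact sum_congr rfl fun i hi => Nat.sum_range_mul_pow_div_pow_mod hdigit (mem_range.mp hi)
end

section
/- Let x = ∑_{i=0}^{m-1} c_i · 2^(i·ℓ) with 0 ≤ c_i and ∑ c_i < 2^ℓ, and suppose all prefix sums ∑_{i=1}^j c_i are < 2^ℓ. Let M = ∑_{j=0}^{m-1} 2^(j·ℓ) (the all-ones-per-block multiplier). Then the block of the product x · M at position (m-1)·ℓ, i.e., (x·M / 2^((m-1)·ℓ)) mod 2^ℓ, equals ∑_{i=0}^{m-1} c_i. -/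
/-!
Write `x = p(2^ℓ)` and `M = q(2^ℓ)` with `p = ∑ cᵢ Xⁱ` and `q = ∑ Xʲ`. Each coefficient of `p q`
is a sum of some of the `cᵢ`, hence `< 2^ℓ`, so the base-`2^ℓ` digits of `x M = (p q)(2^ℓ)` are
exactly the coefficients of `p q`. Since `q` has all coefficients `1` up to degree `m - 1`, the
coefficient of `X^(m-1)` in `p q` is `c₀ + ⋯ + c_{m-1}`.
-/

open Finset Polynomial

namespace Polynomial

theorem eval_mod_eq_coeff_zero (p : ℕ[X]) {b : ℕ} (h : p.coeff 0 < b) :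
    p.eval b % b = p.coeff 0 := by
  conv_lhs => rw [← divX_mul_X_add p]
  simp [Nat.mod_eq_of_lt h]

theorem eval_div_eq_eval_divX (p : ℕ[X]) {b : ℕ} (h : p.coeff 0 < b) :
    p.eval b / b = p.divX.eval b := by
  conv_lhs => rw [← divX_mul_X_add p]
  simp only [eval_add, eval_mul, eval_X, eval_C]
  rw [add_comm, Nat.add_mul_div_right _ _ (Nat.zero_lt_of_lt h), Nat.div_eq_of_lt h, zero_add]

theorem eval_div_pow_mod_eq_coeff {b : ℕ} (p : ℕ[X]) (h : ∀ k, p.coeff k < b) (t : ℕ) :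
    p.eval b / b ^ t % b = p.coeff t := by
  induction t generalizing p with
  | zero => simpa using eval_mod_eq_coeff_zero p (h 0)
  | succ t ih =>
    rw [pow_succ', ← Nat.div_div_eq_div_mul, eval_div_eq_eval_divX p (h 0),
      ih p.divX fun k => by rw [coeff_divX]; exact h (k + 1), coeff_divX]

theorem sum_range_coeff_le_eval_one (p : ℕ[X]) (n : ℕ) :
    ∑ i ∈ range n, p.coeff i ≤ p.eval 1 := by
  rw [eval_eq_sum_range' (n := max n (p.natDegree + 1)) (by omega)]
  simpa using sum_le_sum_of_subset (f := p.coeff) (range_subset_range.2 (le_max_left _ _))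

theorem coeff_mul_le_eval_one (p q : ℕ[X]) (hq : ∀ j, q.coeff j ≤ 1) (k : ℕ) :
    (p * q).coeff k ≤ p.eval 1 :=
  calc (p * q).coeff k = ∑ i ∈ range (k + 1), p.coeff i * q.coeff (k - i) := by
        rw [coeff_mul, Nat.sum_antidiagonal_eq_sum_range_succ_mk]
    _ ≤ ∑ i ∈ range (k + 1), p.coeff i :=
        sum_le_sum fun i _ => mul_le_of_le_one_right (Nat.zero_le _) (hq _)
    _ ≤ p.eval 1 := sum_range_coeff_le_eval_one p (k + 1)

theorem coeff_mul_eq_sum_range_of_coeff_eq_one (p q : ℕ[X]) (k : ℕ)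
    (hq : ∀ j ≤ k, q.coeff j = 1) :
    (p * q).coeff k = ∑ i ∈ range (k + 1), p.coeff i := by
  rw [coeff_mul, Nat.sum_antidiagonal_eq_sum_range_succ_mk]
  exact sum_congr rfl fun i _ => by rw [hq _ (Nat.sub_le k i), mul_one]

theorem coeff_sum_range_C_mul_X_pow (c : ℕ → ℕ) (m i : ℕ) :
    (∑ j ∈ range m, C (c j) * X ^ j).coeff i = if i < m then c i else 0 := by
  simp [finsetSum_coeff]

end Polynomial

theorem gillies_miller_total_general (ℓ m : ℕ) (hm : 1 ≤ m) (c : ℕ → ℕ)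
    (x M : ℕ)
    (hx : x = ∑ i ∈ Finset.range m, c i * 2 ^ (i * ℓ))
    (hM : M = ∑ j ∈ Finset.range m, 2 ^ (j * ℓ))
    (hsum : ∑ i ∈ Finset.range m, c i < 2 ^ ℓ) :
    (x * M / 2 ^ ((m - 1) * ℓ)) % 2 ^ ℓ = ∑ i ∈ Finset.range m, c i := by
  set p : ℕ[X] := ∑ i ∈ range m, C (c i) * X ^ i
  set q : ℕ[X] := ∑ j ∈ range m, C 1 * X ^ j
  have hp : ∀ i, p.coeff i = if i < m then c i else 0 := coeff_sum_range_C_mul_X_pow c m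
  have hq : ∀ j, q.coeff j = if j < m then 1 else 0 := coeff_sum_range_C_mul_X_pow 1 m
  have hxM : x * M = (p * q).eval (2 ^ ℓ) := by
    simp [p, q, hx, hM, eval_finsetSum, pow_mul']
  have hdigit : ∀ k, (p * q).coeff k < 2 ^ ℓ := fun k =>
    (coeff_mul_le_eval_one p q (fun j => by rw [hq]; split_ifs <;> simp) k).trans_lt
      (by simpa [p, eval_finsetSum] using hsum)
  rw [hxM, mul_comm (m - 1), pow_mul, eval_div_pow_mod_eq_coeff _ hdigit,
    coeff_mul_eq_sum_range_of_coeff_eq_one p q _ (fun j hj => by rw [hq, if_pos (by omega)]),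
    Nat.sub_add_cancel hm]
  exact sum_congr rfl fun i hi => by rw [hp, if_pos (mem_range.1 hi)]

/-- Gillies–Miller trick: multiplying the block decomposition `x = ∑ cᵢ 2^(iℓ)`
by the all-ones-per-block multiplier `M = ∑ⱼ 2^(jℓ)` sums all blocks into the
block of the product at position `(m-1)ℓ`, provided all prefix sums fit in `ℓ`
bits. -/
theorem gillies_miller_total (ℓ m : ℕ) (hm : 1 ≤ m) (c : ℕ → ℕ)
    (x M : ℕ)
    (hx : x = ∑ i ∈ Finset.range m, c i * 2 ^ (i * ℓ))
    (hM : M = ∑ j ∈ Finset.range m, 2 ^ (j * ℓ))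
    (hsum : ∑ i ∈ Finset.range m, c i < 2 ^ ℓ)
    (hpref : ∀ j ≤ m, ∑ i ∈ Finset.range j, c i < 2 ^ ℓ) :
    (x * M / 2 ^ ((m - 1) * ℓ)) % 2 ^ ℓ = ∑ i ∈ Finset.range m, c i :=
  gillies_miller_total_general ℓ m hm c x M hx hM hsum
end

section
/- If every prefix sum ∑_{i=0}^{t} c_i of naturals c_0,…,c_{m-1} is strictly less than 2^ℓ, then for all s with 0 ≤ s ≤ m-1, the s-th base-2^ℓ digit of the product (∑_{i=0}^{m-1} c_i·2^{iℓ})·(∑_{j=0}^{m-1} 2^{jℓ}) equals ∑_{i=0}^{min(s, m-1)} c_i. -/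
/-- A sum of `s` digits, each `< 2^ℓ`, in base `2^ℓ` is `< 2^(s*ℓ)`. -/
lemma gm_low_lt (ℓ : ℕ) (D : ℕ → ℕ) :
    ∀ s : ℕ, (∀ k < s, D k < 2 ^ ℓ) →
      ∑ k ∈ Finset.range s, D k * 2 ^ (k * ℓ) < 2 ^ (s * ℓ) := by
  intro s
  induction s with
  | zero => intro _; simp
  | succ n ih =>
    intro hD
    rw [Finset.sum_range_succ]
    have h1 : ∑ k ∈ Finset.range n, D k * 2 ^ (k * ℓ) < 2 ^ (n * ℓ) :=
      ih fun k hk => hD k (Nat.lt_succ_of_lt hk)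
    have h2 : D n + 1 ≤ 2 ^ ℓ := hD n (Nat.lt_succ_self n)
    have h3 : (D n + 1) * 2 ^ (n * ℓ) ≤ 2 ^ ℓ * 2 ^ (n * ℓ) :=
      Nat.mul_le_mul_right _ h2
    rw [add_one_mul] at h3
    have key : 2 ^ ((n + 1) * ℓ) = 2 ^ ℓ * 2 ^ (n * ℓ) := by
      rw [add_mul, one_mul, pow_add]; ring
    rw [key]
    omega

/-- Digit extraction from a base-`2^ℓ` expansion with small digits. -/
lemma gm_digit (ℓ n : ℕ) (D : ℕ → ℕ) (hD : ∀ k < n, D k < 2 ^ ℓ)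
    (s : ℕ) (hs : s < n) :
    ((∑ k ∈ Finset.range n, D k * 2 ^ (k * ℓ)) / 2 ^ (s * ℓ)) % 2 ^ ℓ = D s := by
  obtain ⟨r, rfl⟩ : ∃ r, n = s + (1 + r) := ⟨n - s - 1, by omega⟩
  rw [Finset.sum_range_add]
  have hsplit : ∀ x, D (s + x) * 2 ^ ((s + x) * ℓ)
      = 2 ^ (s * ℓ) * (D (s + x) * 2 ^ (x * ℓ)) := by
    intro x; rw [add_mul, pow_add]; ring
  simp only [hsplit]
  rw [← Finset.mul_sum, Nat.add_mul_div_left _ _ (by positivity : 0 < 2 ^ (s * ℓ)),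
    Nat.div_eq_of_lt (gm_low_lt ℓ D s fun k hk => hD k (by omega)), Nat.zero_add,
    Finset.sum_range_add]
  simp only [Finset.sum_range_one, Nat.add_zero, Nat.zero_mul, pow_zero, Nat.mul_one]
  have : ∀ x, D (s + (1 + x)) * 2 ^ ((1 + x) * ℓ)
      = 2 ^ ℓ * (D (s + (1 + x)) * 2 ^ (x * ℓ)) := by
    intro x; rw [add_mul, pow_add, one_mul]; ring
  simp only [this]
  rw [← Finset.mul_sum, Nat.add_mul_mod_self_left,
    Nat.mod_eq_of_lt (hD s (by omega))]

/-- Full digit structure of the Gillies–Miller product: if every prefix sum of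
the blocks `cᵢ` is `< 2^ℓ`, the `s`-th base-`2^ℓ` digit of
`(∑ cᵢ 2^(iℓ)) * (∑ⱼ 2^(jℓ))` equals `∑_{i ≤ min(s, m-1)} cᵢ`. -/
theorem gillies_miller_digits (ℓ m : ℕ) (hm : 1 ≤ m) (c : ℕ → ℕ)
    (hpref : ∀ t < m, ∑ i ∈ Finset.range (t + 1), c i < 2 ^ ℓ) :
    ∀ s ≤ m - 1,
      (((∑ i ∈ Finset.range m, c i * 2 ^ (i * ℓ)) *
          (∑ j ∈ Finset.range m, 2 ^ (j * ℓ))) / 2 ^ (s * ℓ)) % 2 ^ ℓ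
        = ∑ i ∈ Finset.range (min s (m - 1) + 1), c i := by
  intro s hs
  set D : ℕ → ℕ := fun k =>
    ∑ i ∈ (Finset.range m).filter (fun i => i ≤ k ∧ k ≤ i + (m - 1)), c i with hDdef
  have hprod : (∑ i ∈ Finset.range m, c i * 2 ^ (i * ℓ)) *
      (∑ j ∈ Finset.range m, 2 ^ (j * ℓ))
      = ∑ k ∈ Finset.range (2 * m - 1), D k * 2 ^ (k * ℓ) := by
    rw [Finset.sum_mul]
    simp only [hDdef, Finset.sum_mul, Finset.sum_filter]
    rw [Finset.sum_comm]
    refine Finset.sum_congr rfl fun i hi => ?_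
    rw [Finset.mul_sum]
    have hi' := Finset.mem_range.mp hi
    have hcond : ∀ k, (i ≤ k ∧ k ≤ i + (m - 1)) ↔ k ∈ Finset.Icc i (i + (m - 1)) := by
      intro k; rw [Finset.mem_Icc]
    calc ∑ j ∈ Finset.range m, c i * 2 ^ (i * ℓ) * 2 ^ (j * ℓ)
        = ∑ k ∈ Finset.Icc i (i + (m - 1)), c i * 2 ^ (k * ℓ) := by
          rw [← Finset.Ico_add_one_right_eq_Icc]
          rw [Finset.sum_Ico_eq_sum_range]
          have hm' : i + (m - 1) + 1 - i = m := by omega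
          rw [hm']
          refine Finset.sum_congr rfl fun j _ => ?_
          rw [add_mul, pow_add]; ring
      _ = ∑ k ∈ Finset.range (2 * m - 1),
            (if i ≤ k ∧ k ≤ i + (m - 1) then c i else 0) * 2 ^ (k * ℓ) := by
          simp only [ite_mul, zero_mul, hcond]
          rw [Finset.sum_ite_mem, Finset.inter_eq_right.mpr
            (fun k hk => Finset.mem_range.mpr (by
              have := Finset.mem_Icc.mp hk; omega))]
  have hDlt : ∀ k < 2 * m - 1, D k < 2 ^ ℓ := by
    intro k _
    calc D k ≤ ∑ i ∈ Finset.range (m - 1 + 1), c i := by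
          rw [show m - 1 + 1 = m by omega]
          exact Finset.sum_le_sum_of_subset (Finset.filter_subset _ _)
      _ < 2 ^ ℓ := hpref (m - 1) (by omega)
  rw [hprod, gm_digit ℓ (2 * m - 1) D hDlt s (by omega)]
  have hmin : min s (m - 1) = s := min_eq_left hs
  rw [hmin, hDdef]
  apply Finset.sum_congr
  · ext i
    simp only [Finset.mem_filter, Finset.mem_range]
    omega
  · intro _ _; rfl
end

section
/- For any natural number x and any k, popcount(x) = popcount(x AND m) + popcount((x / 2^(2^k)) AND m'), where m is the mask with the low 2^k bits of each 2^(k+1)-bit block set and m' is the same mask; i.e., splitting x into the even and odd 2^k-bit sub-blocks partitions its set bits. -/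
/-!
Peel off the lowest block of `2w` bits, `x = 2^(2w) b + 2^w a₁ + a₀` with `a₀, a₁ < 2^w`: masking
keeps exactly `a₀` from `x` and exactly `a₁` from `x / 2^w`, while above that block both masked
values see the same number `b`, to which induction on the number of blocks applies.
-/

open Finset

namespace Nat

theorem count_true_bits_eq_mod_two_add (n : ℕ) :
    n.bits.count true = n % 2 + (n / 2).bits.count true := by
  induction n using binaryRec' with
  | zero => simp
  | bit b n h =>
    rw [bits_append_bit _ _ h, bit_mod_two, bit_div_two]
    cases b <;> simp [add_comm]

theorem count_true_bits_two_pow_mul_add {a : ℕ} (b : ℕ) {n : ℕ} (ha : a < 2 ^ n) :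
    (2 ^ n * b + a).bits.count true = a.bits.count true + b.bits.count true := by
  induction n generalizing a with
  | zero => simp_all
  | succ n ih =>
    have hdiv : (2 ^ (n + 1) * b + a) / 2 = 2 ^ n * b + a / 2 := by rw [pow_succ', mul_assoc]; omega
    have hmod : (2 ^ (n + 1) * b + a) % 2 = a % 2 := by rw [pow_succ', mul_assoc]; omega
    rw [count_true_bits_eq_mod_two_add, hdiv, hmod, ih (by rw [pow_succ'] at ha; omega),
      count_true_bits_eq_mod_two_add a, add_assoc]

theorem count_true_bits_eq_mod_add_div (x n : ℕ) :
    x.bits.count true = (x % 2 ^ n).bits.count true + (x / 2 ^ n).bits.count true := by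
  conv_lhs => rw [← div_add_mod x (2 ^ n)]
  exact count_true_bits_two_pow_mul_add _ (mod_lt _ (Nat.two_pow_pos n))

theorem two_pow_mul_add_and_two_pow_mul_add_s14 {a c : ℕ} (b d : ℕ) {n : ℕ}
    (ha : a < 2 ^ n) (hc : c < 2 ^ n) :
    (2 ^ n * b + a) &&& (2 ^ n * d + c) = 2 ^ n * (b &&& d) + (a &&& c) := by
  apply eq_of_testBit_eq
  intro i
  rw [testBit_two_pow_mul_add _ (and_le_left.trans_lt ha), testBit_and,
    testBit_two_pow_mul_add _ ha, testBit_two_pow_mul_add _ hc]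
  split <;> simp

end Nat

def blockMask (w M : ℕ) : ℕ := ∑ j ∈ range M, (2 ^ w - 1) * 2 ^ (j * (2 * w))

theorem blockMask_succ (w M : ℕ) :
    blockMask w (M + 1) = 2 ^ (2 * w) * blockMask w M + (2 ^ w - 1) := by
  simp only [blockMask, sum_range_succ', mul_sum, zero_mul, pow_zero, mul_one]
  congr 1
  refine sum_congr rfl fun j _ => ?_
  rw [add_mul, one_mul, pow_add]
  ring

theorem and_blockMask_succ (y w M : ℕ) :
    y &&& blockMask w (M + 1) = 2 ^ (2 * w) * (y / 2 ^ (2 * w) &&& blockMask w M) + y % 2 ^ w := by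
  have hw : 2 ^ w ≤ 2 ^ (2 * w) := Nat.pow_le_pow_right two_pos (by omega)
  conv_lhs => rw [← Nat.div_add_mod y (2 ^ (2 * w)), blockMask_succ]
  rw [Nat.two_pow_mul_add_and_two_pow_mul_add_s14 _ _ (Nat.mod_lt _ (Nat.two_pow_pos _))
    (by have := Nat.two_pow_pos w; omega), Nat.and_two_pow_sub_one_eq_mod,
    Nat.mod_mod_of_dvd _ (Nat.pow_dvd_pow 2 (by omega))]

theorem count_true_bits_and_blockMask_succ (y w M : ℕ) :
    (y &&& blockMask w (M + 1)).bits.count true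
      = (y % 2 ^ w).bits.count true + (y / 2 ^ (2 * w) &&& blockMask w M).bits.count true := by
  have hw : 2 ^ w ≤ 2 ^ (2 * w) := Nat.pow_le_pow_right two_pos (by omega)
  rw [and_blockMask_succ,
    Nat.count_true_bits_two_pow_mul_add _ ((Nat.mod_lt _ (Nat.two_pow_pos w)).trans_le hw)]

theorem count_true_bits_eq_and_blockMask_add {w M x : ℕ} (hx : x < 2 ^ (M * (2 * w))) :
    x.bits.count true = (x &&& blockMask w M).bits.count true
      + (x / 2 ^ w &&& blockMask w M).bits.count true := by
  induction M generalizing x with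
  | zero => simp_all
  | succ M ih =>
    have hdiv : x / 2 ^ w / 2 ^ w = x / 2 ^ (2 * w) := by
      rw [Nat.div_div_eq_div_mul, ← pow_add, ← two_mul]
    have hshift : x / 2 ^ w / 2 ^ (2 * w) = x / 2 ^ (2 * w) / 2 ^ w := by
      rw [Nat.div_div_eq_div_mul, Nat.div_div_eq_div_mul, mul_comm]
    set b := x / 2 ^ (2 * w)
    have hb : b < 2 ^ (M * (2 * w)) := by
      rw [Nat.div_lt_iff_lt_mul (Nat.two_pow_pos _), ← pow_add, ← Nat.succ_mul]
      exact hx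
    have hx_count : x.bits.count true = (x % 2 ^ w).bits.count true
        + (x / 2 ^ w % 2 ^ w).bits.count true + b.bits.count true := by
      rw [Nat.count_true_bits_eq_mod_add_div x w, Nat.count_true_bits_eq_mod_add_div (x / 2 ^ w) w,
        hdiv, add_assoc]
    rw [hx_count, count_true_bits_and_blockMask_succ, count_true_bits_and_blockMask_succ, hshift,
      ih hb]
    ring

/-- Splitting `x` into the even and odd `2^k`-bit sub-blocks partitions its set
bits: `popcount x = popcount (x AND m) + popcount ((x / 2^(2^k)) AND m)`, where
`m` is the mask with the low `2^k` bits of each `2^(k+1)`-bit block set and the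
mask covers all of `x` (i.e. `x < 2^(M·2^(k+1))`). -/
theorem popcount_split_blocks (x k M : ℕ) (hx : x < 2 ^ (M * 2 ^ (k + 1)))
    (m : ℕ)
    (hm : m = ∑ j ∈ Finset.range M, (2 ^ (2 ^ k) - 1) * 2 ^ (j * 2 ^ (k + 1))) :
    (x.bits.count true)
      = ((x &&& m).bits.count true)
        + (((x / 2 ^ (2 ^ k)) &&& m).bits.count true) := by
  rw [pow_succ'] at hx hm
  subst hm
  exact count_true_bits_eq_and_blockMask_add hx
end

section
/- Let ℓ ≥ 1 and suppose x₁, …, x_m are naturals with each x_i ≤ 2^(ℓ-1) and ∑ x_i ≥ 2^ℓ. Then for the minimal s with ∑_{i=1}^{s+1} ≥ 2^(ℓ-1) (taking s+1 = 1 if x₁ ≥ 2^(ℓ-1)), the prefix sum P = ∑_{i=1}^{s+1} x_i satisfies 2^(ℓ-1) ≤ P ≤ 2^ℓ - 1, and hence P AND 2^(ℓ-1) ≠ 0. -/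
/-!
Every prefix sum before the minimal one is below `c = 2^(ℓ-1)`, and the last term added is at most
`c`, so the minimal prefix sum lies in `[c, 2c)`. A number in `[2^(ℓ-1), 2^ℓ)` has bit `ℓ - 1` set.
-/

open Finset

theorem Nat.and_two_pow_ne_zero_of_two_pow_le_of_lt_two_pow_succ {n i : ℕ}
    (hle : 2 ^ i ≤ n) (hlt : n < 2 ^ (i + 1)) : n &&& 2 ^ i ≠ 0 := by
  rw [Nat.and_two_pow, Nat.testBit_of_two_pow_le_and_two_pow_add_one_gt hle hlt]
  simp

theorem sum_range_lt_two_mul_of_minimal {x : ℕ → ℕ} {m j c : ℕ} (hc : 0 < c)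
    (hx : ∀ i < m, x i ≤ c) (hm : c ≤ ∑ i ∈ range m, x i)
    (hjmin : ∀ j' < j, ∑ i ∈ range j', x i < c) :
    ∑ i ∈ range j, x i < 2 * c := by
  cases j with
  | zero => simpa using hc
  | succ k =>
    -- the total sum reaching `c` keeps the minimal prefix inside the range where `x ≤ c`
    have hkm : k < m := by
      by_contra! hmk
      exact absurd (hjmin m (Nat.lt_succ_of_le hmk)) (not_lt.mpr hm)
    have hprefix := hjmin k (Nat.lt_succ_self k)
    have hlast := hx k hkm
    rw [sum_range_succ]
    omega

/-- Constructive overflow lemma: with each `x i ≤ 2^(ℓ-1)` and total sum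
`≥ 2^ℓ`, the minimal prefix whose sum reaches `2^(ℓ-1)` has sum `P` with
`2^(ℓ-1) ≤ P ≤ 2^ℓ - 1`, and hence `P AND 2^(ℓ-1) ≠ 0`. -/
theorem minimal_prefix_overflow (ℓ m j : ℕ) (hℓ : 1 ≤ ℓ) (x : ℕ → ℕ)
    (hx : ∀ i < m, x i ≤ 2 ^ (ℓ - 1))
    (htot : 2 ^ ℓ ≤ ∑ i ∈ Finset.range m, x i)
    (hj : 2 ^ (ℓ - 1) ≤ ∑ i ∈ Finset.range j, x i)
    (hjmin : ∀ j' < j, ∑ i ∈ Finset.range j', x i < 2 ^ (ℓ - 1)) :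
    2 ^ (ℓ - 1) ≤ ∑ i ∈ Finset.range j, x i ∧
      (∑ i ∈ Finset.range j, x i) ≤ 2 ^ ℓ - 1 ∧
      ((∑ i ∈ Finset.range j, x i) &&& 2 ^ (ℓ - 1)) ≠ 0 := by
  obtain ⟨k, rfl⟩ : ∃ k, ℓ = k + 1 := ⟨ℓ - 1, by omega⟩
  rw [Nat.add_sub_cancel] at *
  have hdouble : 2 ^ (k + 1) = 2 * 2 ^ k := by ring
  have htot' : 2 ^ k ≤ ∑ i ∈ range m, x i := by omega
  have hlt : ∑ i ∈ range j, x i < 2 ^ (k + 1) :=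
    hdouble ▸ sum_range_lt_two_mul_of_minimal (Nat.two_pow_pos k) hx htot' hjmin
  exact ⟨hj, by omega, Nat.and_two_pow_ne_zero_of_two_pow_le_of_lt_two_pow_succ hj hlt⟩
end
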